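/- arXiv:2402.13357 — 9 statements merged into one kernel-verified Lean document; each statement's English description precedes it below -/
import Mathlib

section
/- Let p : Fin n → ℕ with p j > 0, d : Fin n → ℕ nondecreasing, and define S_0 = {0}, S'_{j+1} = S_j + {0, p j}, S_{j+1} = S'_{j+1} ∩ [0, d j]. Then for each j ≥ 1, the number of elements of S'_{j+1} that exceed d j is at most p j, i.e. |S'_{j+1} ∩ (d j, ∞)| ≤ p j. -/
open Pointwise in
theorem Finset.card_filter_lt_add_zero_pair_le {A : Finset ℕ} {c D : ℕ} (q : ℕ)
    (hA : ∀ a ∈ A, a ≤ c) (hcD : c ≤ D) :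
    ((A + {0, q}).filter (D < ·)).card ≤ q := by
  have hsub : (A + {0, q}).filter (D < ·) ⊆ Finset.Ioc D (c + q) := by
    intro x hx
    obtain ⟨hxA, hDx⟩ := Finset.mem_filter.mp hx
    obtain ⟨a, ha, b, hb, rfl⟩ := Finset.mem_add.mp hxA
    have hbq : b ≤ q := by
      rcases Finset.mem_insert.mp hb with rfl | hb
      · exact Nat.zero_le q
      · exact (Finset.mem_singleton.mp hb).le
    exact Finset.mem_Ioc.mpr ⟨hDx, Nat.add_le_add (hA a ha) hbq⟩
  calc _ ≤ (Finset.Ioc D (c + q)).card := Finset.card_le_card hsub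
    _ = c + q - D := Nat.card_Ioc D (c + q)
    _ ≤ q := by omega

open Pointwise in
theorem stmt_3_general (n : ℕ) (p d : ℕ → ℕ)
    (hd : ∀ i j, i ≤ j → j < n → d i ≤ d j)
    (S S' : ℕ → Finset ℕ)
    (hS' : ∀ j < n, S' (j + 1) = S j + ({0, p j} : Finset ℕ))
    (hScap : ∀ j < n, S (j + 1) = (S' (j + 1)).filter (· ≤ d j)) :
    ∀ j, 1 ≤ j → j < n → ((S' (j + 1)).filter (fun x => d j < x)).card ≤ p j := by
  intro j hj hjn
  obtain ⟨k, rfl⟩ : ∃ k, j = k + 1 := ⟨j - 1, by omega⟩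
  have hS_le : ∀ a ∈ S (k + 1), a ≤ d k := fun a ha => by
    rw [hScap k (by omega)] at ha
    exact (Finset.mem_filter.mp ha).2
  rw [hS' (k + 1) hjn]
  exact Finset.card_filter_lt_add_zero_pair_le (p (k + 1)) hS_le (hd k (k + 1) k.le_succ hjn)

open Pointwise in
theorem stmt_3 (n : ℕ) (p d : ℕ → ℕ)
    (hp : ∀ j < n, 0 < p j)
    (hd : ∀ i j, i ≤ j → j < n → d i ≤ d j)
    (S S' : ℕ → Finset ℕ)
    (hS0 : S 0 = {0})
    (hS' : ∀ j < n, S' (j + 1) = S j + ({0, p j} : Finset ℕ))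
    (hScap : ∀ j < n, S (j + 1) = (S' (j + 1)).filter (· ≤ d j)) :
    ∀ j, 1 ≤ j → j < n → ((S' (j + 1)).filter (fun x => d j < x)).card ≤ p j :=
  stmt_3_general n p d hd S S' hS' hScap
end

section
/- Let p : Fin n → ℕ with p j > 0, d nondecreasing, and define S_0 = {0}, S'_{j+1} = S_j + {0, p j}, S_{j+1} = S'_{j+1} ∩ [0, d j]. If x ≤ d j and x ∈ S'_{j+1} \ S_j, then x ∈ S_k for all k with j+1 ≤ k ≤ n. In particular, for each fixed natural number x, there is at most one index j ∈ [n] with x ∈ (S'_{j+1} \ S_j) ∩ [0, d j]. -/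
/-! An element that enters the Lawler–Moore recursion at step `j` below the deadline `d j` is kept by
every later step, since `S m ⊆ S' (m + 1)` (as `0 ∈ {0, p m}`) and the later deadlines are at
least `d j`. So it lies in `S k` for all `k > j`, and it cannot be new at a second, later step. -/

open Finset

theorem mem_of_mem_of_le_deadline {α : Type*} [LinearOrder α] {n j : ℕ} {x : α}
    {d : ℕ → α} {S S' : ℕ → Finset α}
    (hd : ∀ i j, i ≤ j → j < n → d i ≤ d j)
    (hgrow : ∀ m < n, S m ⊆ S' (m + 1))
    (hScap : ∀ j < n, S (j + 1) = (S' (j + 1)).filter (· ≤ d j))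
    (hj : j < n) (hx : x ≤ d j) (hx' : x ∈ S' (j + 1)) :
    ∀ k, j + 1 ≤ k → k ≤ n → x ∈ S k := by
  intro k hjk hkn
  induction k, hjk using Nat.le_induction with
  | base => simpa [hScap j hj] using ⟨hx', hx⟩
  | succ m hjm ih =>
    have hmn : m < n := by omega
    rw [hScap m hmn, mem_filter]
    exact ⟨hgrow m hmn (ih hmn.le), hx.trans (hd j m (by omega) hmn)⟩

theorem card_filter_le_one_of_absent_then_persistent {α : Type*} {S : ℕ → Finset α} {n : ℕ}
    {x : α} (P : ℕ → Prop) [DecidablePred P]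
    (hP : ∀ j < n, P j → x ∉ S j ∧ ∀ k, j + 1 ≤ k → k ≤ n → x ∈ S k) :
    ((range n).filter P).card ≤ 1 := by
  have key : ∀ a ∈ (range n).filter P, ∀ b ∈ (range n).filter P, ¬ a < b := by
    intro a ha b hb hab
    simp only [mem_filter, mem_range] at ha hb
    exact (hP b hb.1 hb.2).1 ((hP a ha.1 ha.2).2 b hab hb.1.le)
  rw [card_le_one]
  intro a ha b hb
  exact le_antisymm (not_lt.1 (key b hb a ha)) (not_lt.1 (key a ha b hb))

open Pointwise in
theorem stmt_4_general (n : ℕ) (p d : ℕ → ℕ)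
    (hd : ∀ i j, i ≤ j → j < n → d i ≤ d j)
    (S S' : ℕ → Finset ℕ)
    (hS' : ∀ j < n, S' (j + 1) = S j + ({0, p j} : Finset ℕ))
    (hScap : ∀ j < n, S (j + 1) = (S' (j + 1)).filter (· ≤ d j)) :
    (∀ j < n, ∀ x : ℕ, x ≤ d j → x ∈ S' (j + 1) → x ∉ S j →
      ∀ k, j + 1 ≤ k → k ≤ n → x ∈ S k) ∧
    (∀ x : ℕ,
      ((Finset.range n).filter
        (fun j => x ∈ S' (j + 1) ∧ x ∉ S j ∧ x ≤ d j)).card ≤ 1) := by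
  have hgrow : ∀ m < n, S m ⊆ S' (m + 1) := fun m hm =>
    hS' m hm ▸ subset_add_left _ (mem_insert_self 0 _)
  have persist := fun j (hj : j < n) x (hx : x ≤ d j) hx' =>
    mem_of_mem_of_le_deadline (x := x) hd hgrow hScap hj hx hx'
  refine ⟨fun j hj x hx hx' _ => persist j hj x hx hx', fun x => ?_⟩
  exact card_filter_le_one_of_absent_then_persistent _ fun j hj ⟨hx', hxS, hx⟩ =>
    ⟨hxS, persist j hj x hx hx'⟩

open Pointwise in
theorem stmt_4 (n : ℕ) (p d : ℕ → ℕ)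
    (hp : ∀ j < n, 0 < p j)
    (hd : ∀ i j, i ≤ j → j < n → d i ≤ d j)
    (S S' : ℕ → Finset ℕ)
    (hS0 : S 0 = {0})
    (hS' : ∀ j < n, S' (j + 1) = S j + ({0, p j} : Finset ℕ))
    (hScap : ∀ j < n, S (j + 1) = (S' (j + 1)).filter (· ≤ d j)) :
    (∀ j < n, ∀ x : ℕ, x ≤ d j → x ∈ S' (j + 1) → x ∉ S j →
      ∀ k, j + 1 ≤ k → k ≤ n → x ∈ S k) ∧
    (∀ x : ℕ,
      ((Finset.range n).filter
        (fun j => x ∈ S' (j + 1) ∧ x ∉ S j ∧ x ≤ d j)).card ≤ 1) :=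
  stmt_4_general n p d hd S S' hS' hScap
end

section
/- Let p : Fin n → ℕ with p j > 0, d nondecreasing, P = Σ_j p j, and define S_0 = {0}, S'_{j+1} = S_j + {0, p j}, S_{j+1} = S'_{j+1} ∩ [0, d j]. Then the total number of insertions satisfies Σ_{j=0}^{n−1} |S'_{j+1} \ S_j| ≤ 2P + 1. -/
/-!
Each step inserts `|S'_{j+1} \ S_j| = |S_{j+1}| - |S_j| + r_j` elements, where `r_j` counts the
elements of `S'_{j+1}` cut off above `d j`. Summing, the first part telescopes to
`|S_n| - |S_0| ≤ (P + 1) - 1`, since `S_n ⊆ [0, P]`. Since `S_j ⊆ [0, d j]` (the due dates are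
nondecreasing), the cut-off elements lie in `(d j, d j + p j]`, so `r_j ≤ p j` and `Σ r_j ≤ P`.
-/

open Pointwise Finset

theorem Finset.sum_range_add_eq_add_sum_of_step {M : Type*} [AddCommMonoid M] {f g h : ℕ → M}
    {n : ℕ} (hstep : ∀ j < n, g j + f j = f (j + 1) + h j) :
    ∑ j ∈ range n, g j + f 0 = f n + ∑ j ∈ range n, h j := by
  induction n with
  | zero => simp
  | succ n ih =>
    calc ∑ j ∈ range (n + 1), g j + f 0 = g n + (∑ j ∈ range n, g j + f 0) := by
          rw [sum_range_succ, add_comm _ (g n), add_assoc]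
      _ = (g n + f n) + ∑ j ∈ range n, h j := by
          rw [ih fun j hj => hstep j (by omega), add_assoc]
      _ = f (n + 1) + ∑ j ∈ range (n + 1), h j := by
          rw [hstep n n.lt_succ_self, sum_range_succ, add_assoc, add_comm (h n)]

theorem Finset.add_pair_subset_Iic {A : Finset ℕ} {m : ℕ} (h : A ⊆ Iic m) (q : ℕ) :
    A + {0, q} ⊆ Iic (m + q) := by
  intro x hx
  obtain ⟨a, ha, e, he, rfl⟩ := mem_add.mp hx
  have := mem_Iic.mp (h ha)
  rw [mem_insert, mem_singleton] at he
  rw [mem_Iic]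
  rcases he with rfl | rfl <;> omega

theorem Finset.card_filter_lt_add_pair_le {A : Finset ℕ} {D : ℕ} (h : A ⊆ Iic D) (q : ℕ) :
    ((A + {0, q}).filter (D < ·)).card ≤ q := by
  calc ((A + {0, q}).filter (D < ·)).card ≤ (Ioc D (D + q)).card :=
        card_le_card fun x hx => by
          obtain ⟨hx, hDx⟩ := mem_filter.mp hx
          have := mem_Iic.mp (add_pair_subset_Iic h q hx)
          rw [mem_Ioc]
          omega
    _ = q := by simp

structure IsLawlerMooreSeq (n : ℕ) (p d : ℕ → ℕ) (S S' : ℕ → Finset ℕ) : Prop where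
  zero : S 0 = {0}
  extend : ∀ j < n, S' (j + 1) = S j + {0, p j}
  trim : ∀ j < n, S (j + 1) = (S' (j + 1)).filter (· ≤ d j)

namespace IsLawlerMooreSeq

variable {n : ℕ} {p d : ℕ → ℕ} {S S' : ℕ → Finset ℕ}

theorem subset_Iic_sum (h : IsLawlerMooreSeq n p d S S') :
    ∀ j ≤ n, S j ⊆ Iic (∑ i ∈ range j, p i) := by
  intro j
  induction j with
  | zero => simp [h.zero]
  | succ j ih =>
    intro hj
    rw [h.trim j hj, h.extend j hj, sum_range_succ]
    exact (filter_subset _ _).trans (add_pair_subset_Iic (ih (by omega)) (p j))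

theorem subset_Iic_dueDate (h : IsLawlerMooreSeq n p d S S')
    (hd : ∀ i j, i ≤ j → j < n → d i ≤ d j) : ∀ j < n, S j ⊆ Iic (d j) := by
  rintro (_ | j) hj
  · simp [h.zero]
  · intro x hx
    rw [h.trim j (by omega), mem_filter] at hx
    exact mem_Iic.mpr (hx.2.trans (hd j (j + 1) j.le_succ hj))

theorem card_sdiff_add_card (h : IsLawlerMooreSeq n p d S S') {j : ℕ} (hj : j < n) :
    (S' (j + 1) \ S j).card + (S j).card =
      (S (j + 1)).card + ((S' (j + 1)).filter (d j < ·)).card := by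
  have hsub : S j ⊆ S' (j + 1) := h.extend j hj ▸ subset_add_left _ (by simp)
  rw [card_sdiff_add_card_eq_card hsub, h.trim j hj, ← card_filter_add_card_filter_not (· ≤ d j)]
  simp only [not_le]

theorem card_filter_lt_le (h : IsLawlerMooreSeq n p d S S')
    (hd : ∀ i j, i ≤ j → j < n → d i ≤ d j) {j : ℕ} (hj : j < n) :
    ((S' (j + 1)).filter (d j < ·)).card ≤ p j := by
  rw [h.extend j hj]
  exact card_filter_lt_add_pair_le (h.subset_Iic_dueDate hd j hj) (p j)

theorem card_le_sum_add_one (h : IsLawlerMooreSeq n p d S S') :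
    (S n).card ≤ ∑ j ∈ range n, p j + 1 :=
  (card_le_card (h.subset_Iic_sum n le_rfl)).trans_eq (Nat.card_Iic _)

end IsLawlerMooreSeq

open Pointwise in
theorem stmt_5_general (n : ℕ) (p d : ℕ → ℕ)
    (hd : ∀ i j, i ≤ j → j < n → d i ≤ d j)
    (S S' : ℕ → Finset ℕ)
    (hS0 : S 0 = {0})
    (hS' : ∀ j < n, S' (j + 1) = S j + ({0, p j} : Finset ℕ))
    (hScap : ∀ j < n, S (j + 1) = (S' (j + 1)).filter (· ≤ d j)) :
    ∑ j ∈ Finset.range n, ((S' (j + 1)) \ (S j)).card ≤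
      2 * (∑ j ∈ Finset.range n, p j) + 1 := by
  have hLM : IsLawlerMooreSeq n p d S S' := ⟨hS0, hS', hScap⟩
  have htelescope := sum_range_add_eq_add_sum_of_step (f := fun j => (S j).card)
    fun j hj => hLM.card_sdiff_add_card hj
  have hcut : ∑ j ∈ range n, ((S' (j + 1)).filter (d j < ·)).card ≤ ∑ j ∈ range n, p j :=
    sum_le_sum fun j hj => hLM.card_filter_lt_le hd (mem_range.mp hj)
  have hfinal := hLM.card_le_sum_add_one
  rw [hS0, card_singleton] at htelescope
  omega

open Pointwise in
theorem stmt_5 (n : ℕ) (p d : ℕ → ℕ)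
    (hp : ∀ j < n, 0 < p j)
    (hd : ∀ i j, i ≤ j → j < n → d i ≤ d j)
    (S S' : ℕ → Finset ℕ)
    (hS0 : S 0 = {0})
    (hS' : ∀ j < n, S' (j + 1) = S j + ({0, p j} : Finset ℕ))
    (hScap : ∀ j < n, S (j + 1) = (S' (j + 1)).filter (· ≤ d j)) :
    ∑ j ∈ Finset.range n, ((S' (j + 1)) \ (S j)).card ≤
      2 * (∑ j ∈ Finset.range n, p j) + 1 :=
  stmt_5_general n p d hd S S' hS0 hS' hScap
end

section
/- Let p : Fin n → ℕ with p j > 0 and d : Fin n → ℕ nondecreasing, and define S_0 = {0}, S'_{j+1} = S_j + {0, p j}, S_{j+1} = S'_{j+1} ∩ [0, d j]. Then for every 0 ≤ j ≤ n and every t ∈ ℕ: t ∈ S_j if and only if there exists a subset J ⊆ {0,…,j−1} with Σ_{i∈J} p i = t such that for every k ∈ J, Σ_{i∈J, i ≤ k} p i ≤ d k. -/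
/-!
By induction on `j`, `S j` is the set of loads `∑ i ∈ J, p i` of feasible `J ⊆ {0, …, j - 1}`.
A feasible subset of `{0, …, j}` containing `j` is a feasible subset of `{0, …, j - 1}` plus the
job `j`, whose completion time is the whole load. One not containing `j` has load at most
`d k ≤ d j`, where `k` is its last job; this is where the due dates must be nondecreasing.
-/

open Finset

def IsEDDFeasible (p d : ℕ → ℕ) (J : Finset ℕ) : Prop :=
  ∀ k ∈ J, ∑ i ∈ J.filter (· ≤ k), p i ≤ d k

instance (p d : ℕ → ℕ) : DecidablePred (IsEDDFeasible p d) :=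
  fun J => inferInstanceAs (Decidable (∀ k ∈ J, ∑ i ∈ J.filter (· ≤ k), p i ≤ d k))

def feasibleSums (p d : ℕ → ℕ) (j : ℕ) : Finset ℕ :=
  ((range j).powerset.filter (IsEDDFeasible p d)).image (fun J => ∑ i ∈ J, p i)

section

variable {p d : ℕ → ℕ}

theorem mem_feasibleSums {j t : ℕ} :
    t ∈ feasibleSums p d j ↔ ∃ J ⊆ range j, ∑ i ∈ J, p i = t ∧ IsEDDFeasible p d J := by
  simp only [feasibleSums, mem_image, mem_filter, mem_powerset, and_assoc]
  exact exists_congr fun J => and_congr_right fun _ => and_comm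

theorem feasibleSums_zero : feasibleSums p d 0 = {0} := by
  ext t
  simp [mem_feasibleSums, IsEDDFeasible, eq_comm]

theorem isEDDFeasible_insert_iff {J : Finset ℕ} {j : ℕ} (hJ : ∀ i ∈ J, i < j) :
    IsEDDFeasible p d (insert j J) ↔ IsEDDFeasible p d J ∧ ∑ i ∈ J, p i + p j ≤ d j := by
  have hj : j ∉ J := fun h => (hJ j h).false
  have h_last : (insert j J).filter (· ≤ j) = insert j J :=
    filter_true_of_mem fun i hi => (mem_insert.mp hi).elim le_of_eq fun h => (hJ i h).le
  have h_before : ∀ k ∈ J, (insert j J).filter (· ≤ k) = J.filter (· ≤ k) := fun k hk => by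
    rw [filter_insert, if_neg (hJ k hk).not_ge]
  unfold IsEDDFeasible
  rw [forall_mem_insert, h_last, sum_insert hj, add_comm (p j), and_comm]
  exact and_congr_left' (forall₂_congr fun k hk => by rw [h_before k hk])

theorem IsEDDFeasible.sum_le {J : Finset ℕ} {D : ℕ} (hJ : IsEDDFeasible p d J)
    (hD : ∀ k ∈ J, d k ≤ D) : ∑ i ∈ J, p i ≤ D := by
  rcases J.eq_empty_or_nonempty with rfl | hne
  · simp
  · have h_all : J.filter (· ≤ J.max' hne) = J := filter_true_of_mem fun i hi => J.le_max' i hi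
    calc ∑ i ∈ J, p i = ∑ i ∈ J.filter (· ≤ J.max' hne), p i := by rw [h_all]
      _ ≤ d (J.max' hne) := hJ _ (J.max'_mem hne)
      _ ≤ D := hD _ (J.max'_mem hne)

open Pointwise in
theorem feasibleSums_succ {j : ℕ} (hd : ∀ k < j, d k ≤ d j) :
    feasibleSums p d (j + 1) = (feasibleSums p d j + {0, p j}).filter (· ≤ d j) := by
  ext t
  simp only [mem_filter, mem_add, mem_insert, mem_singleton, mem_feasibleSums]
  constructor
  · rintro ⟨J, hJ, rfl, hfeas⟩
    have h_lt : ∀ i ∈ J.erase j, i < j := fun i hi =>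
      lt_of_le_of_ne (Nat.lt_succ_iff.mp (mem_range.mp (hJ (mem_of_mem_erase hi))))
        (ne_of_mem_erase hi)
    have h_sub : J.erase j ⊆ range j := fun i hi => mem_range.mpr (h_lt i hi)
    by_cases hj : j ∈ J
    · rw [← insert_erase hj, isEDDFeasible_insert_iff h_lt] at hfeas
      rw [← add_sum_erase J p hj, add_comm]
      exact ⟨⟨_, ⟨J.erase j, h_sub, rfl, hfeas.1⟩, p j, Or.inr rfl, rfl⟩, hfeas.2⟩
    · rw [erase_eq_of_notMem hj] at h_lt h_sub
      exact ⟨⟨_, ⟨J, h_sub, rfl, hfeas⟩, 0, Or.inl rfl, add_zero _⟩,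
        hfeas.sum_le fun k hk => hd k (h_lt k hk)⟩
  · rintro ⟨⟨_, ⟨J, hJ, rfl, hfeas⟩, a, rfl | rfl, rfl⟩, hle⟩
    · exact ⟨J, hJ.trans (range_subset_range.mpr j.le_succ), add_zero _, hfeas⟩
    · have h_lt : ∀ i ∈ J, i < j := fun i hi => mem_range.mp (hJ hi)
      refine ⟨insert j J, ?_, ?_, (isEDDFeasible_insert_iff h_lt).mpr ⟨hfeas, hle⟩⟩
      · rw [range_add_one]
        exact insert_subset_insert j hJ
      · rw [sum_insert fun h => (h_lt j h).false, add_comm]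

end

open Pointwise in
theorem stmt_7_general (n : ℕ) (p d : ℕ → ℕ)
    (hd : ∀ i j, i ≤ j → j < n → d i ≤ d j)
    (S S' : ℕ → Finset ℕ)
    (hS0 : S 0 = {0})
    (hS' : ∀ j < n, S' (j + 1) = S j + ({0, p j} : Finset ℕ))
    (hScap : ∀ j < n, S (j + 1) = (S' (j + 1)).filter (· ≤ d j)) :
    ∀ j ≤ n, ∀ t : ℕ,
      t ∈ S j ↔ ∃ J ⊆ Finset.range j,
        (∑ i ∈ J, p i = t) ∧
        ∀ k ∈ J, ∑ i ∈ J.filter (· ≤ k), p i ≤ d k := by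
  have hS : ∀ j ≤ n, S j = feasibleSums p d j := by
    intro j
    induction j with
    | zero => exact fun _ => hS0.trans feasibleSums_zero.symm
    | succ j ih =>
      intro hj
      rw [hScap j hj, hS' j hj, ih (Nat.le_of_lt hj), feasibleSums_succ fun k hk => hd k j hk.le hj]
  intro j hj t
  rw [hS j hj, mem_feasibleSums]
  rfl

open Pointwise in
theorem stmt_7 (n : ℕ) (p d : ℕ → ℕ)
    (hp : ∀ j < n, 0 < p j)
    (hd : ∀ i j, i ≤ j → j < n → d i ≤ d j)
    (S S' : ℕ → Finset ℕ)
    (hS0 : S 0 = {0})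
    (hS' : ∀ j < n, S' (j + 1) = S j + ({0, p j} : Finset ℕ))
    (hScap : ∀ j < n, S (j + 1) = (S' (j + 1)).filter (· ≤ d j)) :
    ∀ j ≤ n, ∀ t : ℕ,
      t ∈ S j ↔ ∃ J ⊆ Finset.range j,
        (∑ i ∈ J, p i = t) ∧
        ∀ k ∈ J, ∑ i ∈ J.filter (· ≤ k), p i ≤ d k :=
  stmt_7_general n p d hd S S' hS0 hS' hScap
end

section
/- Let p : Fin n → ℕ with p j > 0 and suppose all due dates are equal to a common value d. Then a natural number t belongs to the Lawler–Moore set S_n (defined by S_0 = {0}, S'_{j+1} = S_j + {0, p j}, S_{j+1} = S'_{j+1} ∩ [0, d]) if and only if t ≤ d and t is a subset sum of p, i.e. t = Σ_{i∈J} p i for some J ⊆ {0,…,n−1}. -/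
/-!
Adding a nonnegative item never brings a sum exceeding `d` back below `d`, so capping at `d`
after every step is the same as capping once at the end. Uncapped, the recursion
`S_{j+1} = S_j + {0, p j}` generates exactly the subset sums of `p 0, …, p (j - 1)`.
-/

open Finset Pointwise

def rangeSubsetSums {M : Type*} [AddCommMonoid M] [DecidableEq M] (p : ℕ → M) (n : ℕ) :
    Finset M :=
  (range n).powerset.image fun J => ∑ i ∈ J, p i

namespace rangeSubsetSums

variable {M : Type*} [AddCommMonoid M] [DecidableEq M] (p : ℕ → M)

theorem mem_iff {n : ℕ} {t : M} :
    t ∈ rangeSubsetSums p n ↔ ∃ J ⊆ range n, ∑ i ∈ J, p i = t := by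
  simp [rangeSubsetSums]

theorem zero : rangeSubsetSums p 0 = {0} := by
  simp [rangeSubsetSums]

theorem succ (n : ℕ) : rangeSubsetSums p (n + 1) = rangeSubsetSums p n + {0, p n} := by
  ext t
  simp only [mem_iff, mem_add, mem_insert, mem_singleton, range_add_one]
  constructor
  · rintro ⟨J, hJ, rfl⟩
    refine ⟨∑ i ∈ J.erase n, p i, ⟨J.erase n, ?_, rfl⟩, ?_⟩
    · exact subset_insert_iff.mp hJ
    · by_cases hn : n ∈ J
      · exact ⟨p n, Or.inr rfl, sum_erase_add _ _ hn⟩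
      · exact ⟨0, Or.inl rfl, by rw [erase_eq_of_notMem hn, add_zero]⟩
  · rintro ⟨_, ⟨J, hJ, rfl⟩, b, rfl | rfl, rfl⟩
    · exact ⟨J, hJ.trans (subset_insert _ _), (add_zero _).symm⟩
    · have hn : n ∉ J := fun h => by simpa using hJ h
      exact ⟨insert n J, insert_subset_insert _ hJ, by rw [sum_insert hn, add_comm]⟩

end rangeSubsetSums

theorem filter_le_add_filter_le {M : Type*} [AddCommMonoid M] [PartialOrder M]
    [CanonicallyOrderedAdd M] [DecidableEq M] [DecidableLE M] (A B : Finset M) (d : M) :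
    (A.filter (· ≤ d) + B).filter (· ≤ d) = (A + B).filter (· ≤ d) := by
  ext t
  simp only [mem_filter, mem_add]
  constructor
  · rintro ⟨⟨a, ha, b, hb, rfl⟩, hle⟩
    exact ⟨⟨a, ha.1, b, hb, rfl⟩, hle⟩
  · rintro ⟨⟨a, ha, b, hb, rfl⟩, hle⟩
    exact ⟨⟨a, ⟨ha, le_self_add.trans hle⟩, b, hb, rfl⟩, hle⟩

open Pointwise in
theorem stmt_8_general (n : ℕ) (p : ℕ → ℕ) (d : ℕ)
    (S S' : ℕ → Finset ℕ)
    (hS0 : S 0 = {0})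
    (hS' : ∀ j < n, S' (j + 1) = S j + ({0, p j} : Finset ℕ))
    (hScap : ∀ j < n, S (j + 1) = (S' (j + 1)).filter (· ≤ d)) :
    ∀ t : ℕ, t ∈ S n ↔ t ≤ d ∧ ∃ J ⊆ Finset.range n, ∑ i ∈ J, p i = t := by
  have hS : ∀ j ≤ n, S j = (rangeSubsetSums p j).filter (· ≤ d) := by
    intro j hj
    induction j with
    | zero => rw [hS0, rangeSubsetSums.zero, filter_singleton, if_pos (Nat.zero_le d)]
    | succ j ih =>
      rw [hScap j hj, hS' j hj, ih (by omega), filter_le_add_filter_le, rangeSubsetSums.succ]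
  intro t
  rw [hS n le_rfl, mem_filter, rangeSubsetSums.mem_iff, and_comm]

open Pointwise in
theorem stmt_8 (n : ℕ) (p : ℕ → ℕ) (d : ℕ)
    (hp : ∀ j < n, 0 < p j)
    (S S' : ℕ → Finset ℕ)
    (hS0 : S 0 = {0})
    (hS' : ∀ j < n, S' (j + 1) = S j + ({0, p j} : Finset ℕ))
    (hScap : ∀ j < n, S (j + 1) = (S' (j + 1)).filter (· ≤ d)) :
    ∀ t : ℕ, t ∈ S n ↔ t ≤ d ∧ ∃ J ⊆ Finset.range n, ∑ i ∈ J, p i = t :=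
  stmt_8_general n p d S S' hS0 hS' hScap
end

section
/- Let m ≥ 1 be fixed, p : Fin n → ℕ with p j > 0, d : Fin n → ℕ nondecreasing, P = Σ_j p j, and define sets S_j ⊆ ℕ^m by S_0 = {0}, S'_{j+1} = S_j + {0, p j · e_0, …, p j · e_{m−1}}, S_{j+1} = S'_{j+1} ∩ [0, d j]^m. Then Σ_{j∈[n]} |S'_{j+1} \ S_j| ≤ (m+1) · (P+1)^m. -/
/-!
Every vector of `S' (j+1) \ S j` either survives the truncation, and then lies in `S (j+1) \ S j`,
or is cut off. The sets `S j` increase, so the survivors telescope to at most `|S n| ≤ (P+1)^m`.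
A cut-off vector is `y + p j • eᵢ` with `y ∈ [0, d j]^m` and `i` the only coordinate exceeding
`d j`, so it lies in the slab `d j < xᵢ ≤ d j + p j` of the box `[0, P]^m`; the `m` slabs hold
`m · p j · (P+1)^(m-1)` points, and summing over `j` gives at most `m · (P+1)^m` more.
-/

open Finset Pointwise

section Box

variable {ι : Type*} [Fintype ι] [DecidableEq ι]

theorem card_le_pow_of_forall_apply_le {s : Finset (ι → ℕ)} {b : ℕ}
    (h : ∀ x ∈ s, ∀ i, x i ≤ b) : #s ≤ (b + 1) ^ Fintype.card ι :=
  calc #s ≤ #(Fintype.piFinset fun _ : ι => range (b + 1)) :=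
        card_le_card fun x hx =>
          Fintype.mem_piFinset.2 fun i => mem_range.2 (Nat.lt_succ_of_le (h x hx i))
    _ = (b + 1) ^ Fintype.card ι := by simp

theorem card_le_of_forall_mem_slab {s : Finset (ι → ℕ)} (i : ι) {a q b : ℕ}
    (h : ∀ x ∈ s, a < x i ∧ x i ≤ a + q ∧ ∀ k ≠ i, x k ≤ b) :
    #s ≤ q * (b + 1) ^ (Fintype.card ι - 1) := by
  have hslab :
      s ⊆ Fintype.piFinset (Function.update (fun _ => range (b + 1)) i (Ioc a (a + q))) := by
    intro x hx
    obtain ⟨hlo, hhi, hrest⟩ := h x hx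
    refine Fintype.mem_piFinset.2 fun k => ?_
    rcases eq_or_ne k i with rfl | hk
    · simpa using ⟨hlo, hhi⟩
    · simpa [Function.update_of_ne hk, Nat.lt_succ_iff] using hrest k hk
  refine (card_le_card hslab).trans_eq ?_
  rw [Fintype.card_piFinset, Fintype.prod_eq_mul_prod_compl i,
    prod_congr rfl fun k hk => by rw [Function.update_of_ne (by simpa using hk)]]
  simp [card_compl]

end Box

section AddUnitMultiples

variable {ι : Type*} [Fintype ι] [DecidableEq ι]

def addUnitMultiples (t : Finset (ι → ℕ)) (q : ℕ) : Finset (ι → ℕ) :=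
  t + insert 0 (univ.image fun i => Pi.single i q)

variable {t : Finset (ι → ℕ)} {q : ℕ}

theorem mem_addUnitMultiples {x : ι → ℕ} :
    x ∈ addUnitMultiples t q ↔ x ∈ t ∨ ∃ y ∈ t, ∃ i, x = y + Pi.single i q := by
  simp only [addUnitMultiples, mem_add, mem_insert, mem_image, mem_univ, true_and]
  constructor
  · rintro ⟨y, hy, s, rfl | ⟨i, rfl⟩, rfl⟩
    · exact .inl (by simpa using hy)
    · exact .inr ⟨y, hy, i, rfl⟩
  · rintro (hx | ⟨y, hy, i, rfl⟩)
    · exact ⟨x, hx, 0, .inl rfl, add_zero x⟩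
    · exact ⟨y, hy, _, .inr ⟨i, rfl⟩, rfl⟩

theorem subset_addUnitMultiples : t ⊆ addUnitMultiples t q :=
  fun _ hx => mem_addUnitMultiples.2 (.inl hx)

theorem apply_le_of_mem_addUnitMultiples {b : ℕ} (ht : ∀ y ∈ t, ∀ k, y k ≤ b) {x : ι → ℕ}
    (hx : x ∈ addUnitMultiples t q) (k : ι) : x k ≤ b + q := by
  rcases mem_addUnitMultiples.1 hx with hx | ⟨y, hy, i, rfl⟩
  · exact (ht x hx k).trans (Nat.le_add_right b q)
  · have hsingle : (Pi.single i q : ι → ℕ) k ≤ q := by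
      rcases eq_or_ne k i with rfl | hk <;> simp [*]
    exact add_le_add (ht y hy k) hsingle

theorem card_filter_not_forall_apply_le_addUnitMultiples {a b : ℕ}
    (hta : ∀ y ∈ t, ∀ k, y k ≤ a) (htb : ∀ y ∈ t, ∀ k, y k ≤ b) :
    #((addUnitMultiples t q).filter fun x => ¬ ∀ k, x k ≤ a) ≤
      Fintype.card ι * (q * (b + 1) ^ (Fintype.card ι - 1)) := by
  have hslab : ∀ i, ∀ x ∈ (addUnitMultiples t q).filter (fun x => a < x i),
      a < x i ∧ x i ≤ a + q ∧ ∀ k ≠ i, x k ≤ b := by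
    intro i x hx
    obtain ⟨hx, hax⟩ := mem_filter.1 hx
    rcases mem_addUnitMultiples.1 hx with hxt | ⟨y, hy, i', rfl⟩
    · exact absurd (hta x hxt i) (not_le.2 hax)
    have hyi := hta y hy i
    obtain rfl : i = i' := by
      by_contra hne
      simp [Ne.symm hne] at hax
      omega
    exact ⟨hax, by simpa using hyi, fun k hk => by simpa [Pi.single_apply, hk] using htb y hy k⟩
  calc _ ≤ #(univ.biUnion fun i => (addUnitMultiples t q).filter fun x => a < x i) := by
        refine card_le_card fun x hx => ?_
        obtain ⟨hx, hover⟩ := mem_filter.1 hx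
        push Not at hover
        obtain ⟨i, hi⟩ := hover
        exact mem_biUnion.2 ⟨i, mem_univ i, mem_filter.2 ⟨hx, hi⟩⟩
    _ ≤ ∑ i, #((addUnitMultiples t q).filter fun x => a < x i) := card_biUnion_le
    _ ≤ _ := by
        simpa using sum_le_card_nsmul univ _ _ fun i _ => card_le_of_forall_mem_slab i (hslab i)

theorem apply_le_sum_range_of_subset_addUnitMultiples {S : ℕ → Finset (ι → ℕ)} {p : ℕ → ℕ}
    {n : ℕ} (hS0 : S 0 = {0}) (hS : ∀ j < n, S (j + 1) ⊆ addUnitMultiples (S j) (p j)) :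
    ∀ j ≤ n, ∀ x ∈ S j, ∀ i, x i ≤ ∑ t ∈ range j, p t := by
  intro j
  induction j with
  | zero => simp [hS0]
  | succ j ih =>
    intro hj x hx i
    rw [sum_range_succ]
    exact apply_le_of_mem_addUnitMultiples (ih (by omega)) (hS j (by omega) hx) i

end AddUnitMultiples

theorem apply_le_of_forall_mem_succ_apply_le {ι : Type*} {S : ℕ → Finset (ι → ℕ)} {d : ℕ → ℕ}
    {n : ℕ} (hS0 : S 0 = {0}) (hd : ∀ j, j + 1 < n → d j ≤ d (j + 1))
    (hS : ∀ j < n, ∀ x ∈ S (j + 1), ∀ i, x i ≤ d j) : ∀ j < n, ∀ x ∈ S j, ∀ i, x i ≤ d j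
  | 0, _, x, hx, i => by simp_all
  | j + 1, hj, x, hx, i => (hS j (by omega) x hx i).trans (hd j hj)

theorem card_sdiff_le_card_sdiff_add_card_sdiff {α : Type*} [DecidableEq α] (s t u : Finset α) :
    #(u \ s) ≤ #(t \ s) + #(u \ t) :=
  (card_le_card (sdiff_triangle u t s)).trans ((card_union_le _ _).trans_eq (add_comm _ _))

theorem sum_card_sdiff_add_card_eq_card {α : Type*} [DecidableEq α] {S : ℕ → Finset α} {n : ℕ}
    (hS : ∀ j < n, S j ⊆ S (j + 1)) : ∑ j ∈ range n, #(S (j + 1) \ S j) + #(S 0) = #(S n) := by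
  induction n with
  | zero => simp
  | succ n ih =>
    rw [sum_range_succ, add_right_comm, ih fun j hj => hS j (by omega), add_comm,
      card_sdiff_add_card_eq_card (hS n n.lt_succ_self)]

theorem mul_mul_pow_pred_le (m b : ℕ) : m * (b * (b + 1) ^ (m - 1)) ≤ m * (b + 1) ^ m := by
  rcases m with _ | m
  · simp
  · rw [Nat.add_sub_cancel, pow_succ']
    exact Nat.mul_le_mul_left _ (Nat.mul_le_mul_right _ (Nat.le_succ b))

open Pointwise in
theorem stmt_13_general (m n : ℕ) (p d : ℕ → ℕ)
    (hd : ∀ i j, i ≤ j → j < n → d i ≤ d j)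
    (S S' : ℕ → Finset (Fin m → ℕ))
    (hS0 : S 0 = {0})
    (hS' : ∀ j < n, S' (j + 1) =
      S j + insert 0 ((Finset.univ : Finset (Fin m)).image (fun i => Pi.single i (p j))))
    (hScap : ∀ j < n, S (j + 1) = (S' (j + 1)).filter (fun x => ∀ i, x i ≤ d j)) :
    ∑ j ∈ Finset.range n, ((S' (j + 1)) \ (S j)).card ≤
      (m + 1) * ((∑ j ∈ Finset.range n, p j) + 1) ^ m := by
  set P := ∑ j ∈ range n, p j with hP_def
  replace hS' : ∀ j < n, S' (j + 1) = addUnitMultiples (S j) (p j) := hS'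
  have hS_le_P : ∀ j ≤ n, ∀ x ∈ S j, ∀ i, x i ≤ P := fun j hj x hx i =>
    (apply_le_sum_range_of_subset_addUnitMultiples hS0
      (fun j hj => hS' j hj ▸ hScap j hj ▸ filter_subset _ _) j hj x hx i).trans
      (sum_le_sum_of_subset (range_subset_range.2 hj))
  have hS_le_d : ∀ j < n, ∀ x ∈ S j, ∀ i, x i ≤ d j :=
    apply_le_of_forall_mem_succ_apply_le hS0 (fun j hj => hd j (j + 1) j.le_succ hj)
      fun j hj x hx => (mem_filter.1 (hScap j hj ▸ hx)).2
  have hmono : ∀ j < n, S j ⊆ S (j + 1) := fun j hj x hx => by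
    rw [hScap j hj, hS' j hj]
    exact mem_filter.2 ⟨subset_addUnitMultiples hx, hS_le_d j hj x hx⟩
  have hcut : ∀ j < n, #(S' (j + 1) \ S (j + 1)) ≤ m * (p j * (P + 1) ^ (m - 1)) := fun j hj => by
    rw [hScap j hj, ← filter_not, hS' j hj]
    simpa using card_filter_not_forall_apply_le_addUnitMultiples (hS_le_d j hj) (hS_le_P j hj.le)
  calc ∑ j ∈ range n, #(S' (j + 1) \ S j)
      ≤ ∑ j ∈ range n, (#(S (j + 1) \ S j) + m * (p j * (P + 1) ^ (m - 1))) :=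
        sum_le_sum fun j hj => (card_sdiff_le_card_sdiff_add_card_sdiff _ (S (j + 1)) _).trans
          (Nat.add_le_add_left (hcut j (mem_range.1 hj)) _)
    _ ≤ (P + 1) ^ m + m * (P * (P + 1) ^ (m - 1)) := by
        rw [sum_add_distrib, ← mul_sum, ← sum_mul, ← hP_def]
        have htel := sum_card_sdiff_add_card_eq_card hmono
        have hbox := card_le_pow_of_forall_apply_le (hS_le_P n le_rfl)
        rw [Fintype.card_fin] at hbox
        omega
    _ ≤ (m + 1) * (P + 1) ^ m := by
        linarith [mul_mul_pow_pred_le m P]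

open Pointwise in
theorem stmt_13 (m n : ℕ) (hm : 1 ≤ m) (p d : ℕ → ℕ)
    (hp : ∀ j < n, 0 < p j)
    (hd : ∀ i j, i ≤ j → j < n → d i ≤ d j)
    (S S' : ℕ → Finset (Fin m → ℕ))
    (hS0 : S 0 = {0})
    (hS' : ∀ j < n, S' (j + 1) =
      S j + insert 0 ((Finset.univ : Finset (Fin m)).image (fun i => Pi.single i (p j))))
    (hScap : ∀ j < n, S (j + 1) = (S' (j + 1)).filter (fun x => ∀ i, x i ≤ d j)) :
    ∑ j ∈ Finset.range n, ((S' (j + 1)) \ (S j)).card ≤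
      (m + 1) * ((∑ j ∈ Finset.range n, p j) + 1) ^ m :=
  stmt_13_general m n p d hd S S' hS0 hS' hScap
end

section
/- Let m ≥ 1, p : Fin n → ℕ with p j > 0, d : Fin n → ℕ nondecreasing, and define S_0 = {0} ⊆ ℕ^m, S'_{j+1} = S_j + {0, p j·e_0, …, p j·e_{m−1}}, S_{j+1} = S'_{j+1} ∩ [0, d j]^m. If a vector x ∈ ℕ^m satisfies x ∈ S'_{j+1} \ S_j and all coordinates of x are at most d j, then x ∈ S_k for all k with j+1 ≤ k ≤ n. -/
theorem mem_of_mem_of_le_of_monotone {ι : Type*} {n j : ℕ} {d : ℕ → ℕ}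
    (hd : ∀ i k, i ≤ k → k < n → d i ≤ d k) {S : ℕ → Finset (ι → ℕ)}
    (hstep : ∀ k < n, ∀ x ∈ S k, (∀ i, x i ≤ d k) → x ∈ S (k + 1))
    {x : ι → ℕ} (hx : x ∈ S (j + 1)) (hle : ∀ i, x i ≤ d j) :
    ∀ k, j + 1 ≤ k → k ≤ n → x ∈ S k := by
  refine Nat.le_induction (fun _ ↦ hx) fun k hjk ih hkn ↦ ?_
  exact hstep k hkn x (ih (Nat.le_of_succ_le hkn)) fun i ↦
    (hle i).trans (hd j k (by omega) hkn)

open Pointwise in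
theorem stmt_14_general (m n : ℕ) (p d : ℕ → ℕ)
    (hd : ∀ i j, i ≤ j → j < n → d i ≤ d j)
    (S S' : ℕ → Finset (Fin m → ℕ))
    (hS' : ∀ j < n, S' (j + 1) =
      S j + insert 0 ((Finset.univ : Finset (Fin m)).image (fun i => Pi.single i (p j))))
    (hScap : ∀ j < n, S (j + 1) = (S' (j + 1)).filter (fun x => ∀ i, x i ≤ d j)) :
    ∀ j < n, ∀ x : Fin m → ℕ, x ∈ S' (j + 1) → x ∉ S j → (∀ i, x i ≤ d j) →
      ∀ k, j + 1 ≤ k → k ≤ n → x ∈ S k := by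
  intro j hj x hx _ hle
  have hstep : ∀ k < n, ∀ y ∈ S k, (∀ i, y i ≤ d k) → y ∈ S (k + 1) := by
    intro k hk y hy hyle
    rw [hScap k hk, Finset.mem_filter, hS' k hk]
    exact ⟨Finset.subset_add_left _ (Finset.mem_insert_self _ _) hy, hyle⟩
  have hx' : x ∈ S (j + 1) := by
    rw [hScap j hj, Finset.mem_filter]
    exact ⟨hx, hle⟩
  exact mem_of_mem_of_le_of_monotone hd hstep hx' hle

open Pointwise in
theorem stmt_14 (m n : ℕ) (hm : 1 ≤ m) (p d : ℕ → ℕ)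
    (hp : ∀ j < n, 0 < p j)
    (hd : ∀ i j, i ≤ j → j < n → d i ≤ d j)
    (S S' : ℕ → Finset (Fin m → ℕ))
    (hS0 : S 0 = {0})
    (hS' : ∀ j < n, S' (j + 1) =
      S j + insert 0 ((Finset.univ : Finset (Fin m)).image (fun i => Pi.single i (p j))))
    (hScap : ∀ j < n, S (j + 1) = (S' (j + 1)).filter (fun x => ∀ i, x i ≤ d j)) :
    ∀ j < n, ∀ x : Fin m → ℕ, x ∈ S' (j + 1) → x ∉ S j → (∀ i, x i ≤ d j) →
      ∀ k, j + 1 ≤ k → k ≤ n → x ∈ S k :=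
  stmt_14_general m n p d hd S S' hS' hScap
end

section
/- Let m ≥ 1, and let p : Fin n → ℕ with p j > 0 and d : Fin n → ℕ nondecreasing. Define S_0 = {0} ⊆ ℕ^m, S'_{j+1} = S_j + {0, p j·e_0, …, p j·e_{m−1}}, S_{j+1} = S'_{j+1} ∩ [0, d j]^m. Then for every vector s ∈ S_n there exists a partition of some subset J ⊆ {0,…,n−1} into classes J_0,…,J_{m−1} such that s_i = Σ_{k∈J_i} p k for each machine i, and for every i and every k ∈ J_i, the prefix sum Σ_{k'∈J_i, k'≤k} p k' is at most d k. -/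
/-!
Induction on the number of jobs. A vector of `S (j + 1)` is `t + v` with `t ∈ S j` and `v` either
`0` (job `j` is left out) or `p j • e_i` (job `j` goes last on machine `i`). Job `j` has the largest
index on its machine, so its prefix sum is the whole new load `t i + p j`, which the cap bounds by
`d j`; the prefix sums of the earlier jobs do not change.
-/

/-- The prefix sum over `J i` up to `k` is the completion time of job `k` when machine `i` runs its
jobs in increasing index order, which is earliest-due-date order when `d` is monotone. -/
structure IsEDDSchedule {ι : Type*} (n : ℕ) (p d : ℕ → ℕ) (s : ι → ℕ) (J : ι → Finset ℕ) :
    Prop where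
  subset_range : ∀ i, J i ⊆ Finset.range n
  disjoint : ∀ i i', i ≠ i' → Disjoint (J i) (J i')
  load_eq : ∀ i, s i = ∑ k ∈ J i, p k
  prefix_sum_le : ∀ i, ∀ k ∈ J i, ∑ k' ∈ (J i).filter (· ≤ k), p k' ≤ d k

namespace IsEDDSchedule

variable {ι : Type*} {n : ℕ} {p d : ℕ → ℕ} {s : ι → ℕ} {J : ι → Finset ℕ}

theorem empty : IsEDDSchedule 0 p d (0 : ι → ℕ) fun _ => ∅ :=
  ⟨by simp, by simp, by simp, by simp⟩

theorem notMem (h : IsEDDSchedule n p d s J) (i : ι) : n ∉ J i :=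
  fun hn => lt_irrefl n (Finset.mem_range.mp (h.subset_range i hn))

theorem mono {n' : ℕ} (h : IsEDDSchedule n p d s J) (hn : n ≤ n') : IsEDDSchedule n' p d s J :=
  { h with
    subset_range := fun i => (h.subset_range i).trans (Finset.range_subset_range.mpr hn) }

theorem succ_assign [DecidableEq ι] (h : IsEDDSchedule n p d s J) (i₀ : ι)
    (hfit : s i₀ + p n ≤ d n) :
    IsEDDSchedule (n + 1) p d (s + Pi.single i₀ (p n))
      (Function.update J i₀ (insert n (J i₀))) where
  subset_range i := by
    rcases eq_or_ne i i₀ with rfl | hi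
    · simpa [Finset.range_add_one] using
        Finset.insert_subset_insert n (h.subset_range i)
    · simpa [hi] using (h.subset_range i).trans (Finset.range_subset_range.mpr n.le_succ)
  disjoint i i' hii' := by
    have hins : ∀ i', i' ≠ i₀ → Disjoint (insert n (J i₀)) (J i') := fun i' hi' =>
      Finset.disjoint_insert_left.mpr ⟨h.notMem i', h.disjoint i₀ i' hi'.symm⟩
    rcases eq_or_ne i i₀ with rfl | hi
    · simpa [Function.update_of_ne hii'.symm] using hins i' hii'.symm
    rcases eq_or_ne i' i₀ with rfl | hi'
    · simpa [Function.update_of_ne hi] using (hins i hi).symm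
    simpa [Function.update_of_ne hi, Function.update_of_ne hi'] using h.disjoint i i' hii'
  load_eq i := by
    rcases eq_or_ne i i₀ with rfl | hi
    · simp [Finset.sum_insert (h.notMem i), h.load_eq i, add_comm]
    · simp [hi, h.load_eq i]
  prefix_sum_le i k hk := by
    rcases eq_or_ne i i₀ with rfl | hi
    · simp only [Function.update_self] at hk ⊢
      rcases Finset.mem_insert.mp hk with rfl | hk
      · have hall : ∀ k' ∈ insert k (J i), k' ≤ k := by
          simpa using fun k' hk' => (Finset.mem_range.mp (h.subset_range i hk')).le
        rw [Finset.filter_true_of_mem hall, Finset.sum_insert (h.notMem i), ← h.load_eq i]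
        omega
      · have hkn : ¬ n ≤ k := not_le.mpr (Finset.mem_range.mp (h.subset_range i hk))
        rw [Finset.filter_insert, if_neg hkn]
        exact h.prefix_sum_le i k hk
    · simp only [Function.update_of_ne hi] at hk ⊢
      exact h.prefix_sum_le i k hk

end IsEDDSchedule

theorem exists_isEDDSchedule_of_mem {ι : Type*} [DecidableEq ι] (p d : ℕ → ℕ)
    (S : ℕ → Set (ι → ℕ)) (hS0 : S 0 = {0}) (n : ℕ)
    (hstep : ∀ j < n, ∀ x ∈ S (j + 1), (∀ i, x i ≤ d j) ∧
      ∃ t ∈ S j, x = t ∨ ∃ i, x = t + Pi.single i (p j)) :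
    ∀ s ∈ S n, ∃ J, IsEDDSchedule n p d s J := by
  induction n with
  | zero =>
    intro s hs
    rw [hS0, Set.mem_singleton_iff] at hs
    exact ⟨_, hs ▸ IsEDDSchedule.empty⟩
  | succ n ih =>
    intro s hs
    obtain ⟨hcap, t, ht, hst⟩ := hstep n n.lt_succ_self s hs
    obtain ⟨J, hJ⟩ := ih (fun j hj => hstep j (hj.trans n.lt_succ_self)) t ht
    rcases hst with rfl | ⟨i₀, rfl⟩
    · exact ⟨J, hJ.mono n.le_succ⟩
    · exact ⟨_, hJ.succ_assign i₀ (by simpa using hcap i₀)⟩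

open Pointwise in
theorem stmt_15_general (m n : ℕ) (p d : ℕ → ℕ)
    (S S' : ℕ → Finset (Fin m → ℕ))
    (hS0 : S 0 = {0})
    (hS' : ∀ j < n, S' (j + 1) =
      S j + insert 0 ((Finset.univ : Finset (Fin m)).image (fun i => Pi.single i (p j))))
    (hScap : ∀ j < n, S (j + 1) = (S' (j + 1)).filter (fun x => ∀ i, x i ≤ d j)) :
    ∀ s ∈ S n, ∃ J : Fin m → Finset ℕ,
      (∀ i, J i ⊆ Finset.range n) ∧
      (∀ i i', i ≠ i' → Disjoint (J i) (J i')) ∧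
      (∀ i, s i = ∑ k ∈ J i, p k) ∧
      (∀ i, ∀ k ∈ J i, ∑ k' ∈ (J i).filter (· ≤ k), p k' ≤ d k) := by
  intro s hs
  have hstep : ∀ j < n, ∀ x ∈ S (j + 1), (∀ i, x i ≤ d j) ∧
      ∃ t ∈ S j, x = t ∨ ∃ i, x = t + Pi.single i (p j) := by
    intro j hj x hx
    rw [hScap j hj, Finset.mem_filter, hS' j hj, Finset.mem_add] at hx
    obtain ⟨⟨t, ht, v, hv, rfl⟩, hcap⟩ := hx
    refine ⟨hcap, t, ht, ?_⟩
    simp only [Finset.mem_insert, Finset.mem_image, Finset.mem_univ, true_and] at hv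
    rcases hv with rfl | ⟨i, rfl⟩
    exacts [.inl (add_zero t), .inr ⟨i, rfl⟩]
  obtain ⟨J, hJ⟩ := exists_isEDDSchedule_of_mem p d (fun j => S j) (by simp [hS0]) n hstep s hs
  exact ⟨J, hJ.subset_range, hJ.disjoint, hJ.load_eq, hJ.prefix_sum_le⟩

open Pointwise in
theorem stmt_15 (m n : ℕ) (hm : 1 ≤ m) (p d : ℕ → ℕ)
    (hp : ∀ j < n, 0 < p j)
    (hd : ∀ i j, i ≤ j → j < n → d i ≤ d j)
    (S S' : ℕ → Finset (Fin m → ℕ))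
    (hS0 : S 0 = {0})
    (hS' : ∀ j < n, S' (j + 1) =
      S j + insert 0 ((Finset.univ : Finset (Fin m)).image (fun i => Pi.single i (p j))))
    (hScap : ∀ j < n, S (j + 1) = (S' (j + 1)).filter (fun x => ∀ i, x i ≤ d j)) :
    ∀ s ∈ S n, ∃ J : Fin m → Finset ℕ,
      (∀ i, J i ⊆ Finset.range n) ∧
      (∀ i i', i ≠ i' → Disjoint (J i) (J i')) ∧
      (∀ i, s i = ∑ k ∈ J i, p k) ∧
      (∀ i, ∀ k ∈ J i, ∑ k' ∈ (J i).filter (· ≤ k), p k' ≤ d k) :=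
  stmt_15_general m n p d S S' hS0 hS' hScap
end

section
/- Let p : Fin n → ℕ with p j > 0 and d : Fin n → ℕ nondecreasing, and let S_j denote the Lawler–Moore sets (S_0 = {0}, S'_{j+1} = S_j + {0, p j}, S_{j+1} = S'_{j+1} ∩ [0, d j]). Define A(s) = min { j ∈ [n] : s ∈ S_{j+1} } for each s ∈ S_n with s > 0. Then for every s ∈ S_n with s > 0, letting j = A(s), we have s − p j ∈ S_j and s − p j ∈ S_n whenever s ≤ d j; in particular s − p j ≥ 0 and s − p j is again in S_{j}. -/
/-! The job `j = A(s)` must have been used to reach `s`: otherwise `s` would already lie in `S j`,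
contradicting minimality. Hence `s - p j ∈ S j`. Since `s - p j ≤ s ≤ d j` and the deadlines are
nondecreasing, the later filters never remove `s - p j`, and skipping every later job keeps it
in each `S k` up to `S n`. -/

open Pointwise

theorem Finset.mem_add_zero_pair_iff {t : Finset ℕ} {a x : ℕ} :
    x ∈ t + {0, a} ↔ x ∈ t ∨ a ≤ x ∧ x - a ∈ t := by
  simp only [Finset.mem_add, Finset.mem_insert, Finset.mem_singleton]
  constructor
  · rintro ⟨y, hy, e, rfl | rfl, rfl⟩
    · exact .inl (by simpa using hy)
    · exact .inr ⟨by omega, by simpa using hy⟩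
  · rintro (hx | ⟨hax, hx⟩)
    · exact ⟨x, hx, 0, .inl rfl, rfl⟩
    · exact ⟨x - a, hx, a, .inr rfl, by omega⟩

namespace LawlerMoore

variable {n : ℕ} {p d : ℕ → ℕ} {S : ℕ → Finset ℕ}

theorem mem_succ_iff (hS : ∀ j < n, S (j + 1) = (S j + {0, p j}).filter (· ≤ d j))
    {j x : ℕ} (hj : j < n) :
    x ∈ S (j + 1) ↔ (x ∈ S j ∨ p j ≤ x ∧ x - p j ∈ S j) ∧ x ≤ d j := by
  rw [hS j hj, Finset.mem_filter, Finset.mem_add_zero_pair_iff]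

theorem mem_of_mem_of_le_deadlines
    (hS : ∀ j < n, S (j + 1) = (S j + {0, p j}).filter (· ≤ d j))
    {i x : ℕ} (hx : x ∈ S i) {k : ℕ} (hik : i ≤ k) (hkn : k ≤ n)
    (hxd : ∀ m, i ≤ m → m < k → x ≤ d m) : x ∈ S k := by
  induction k, hik using Nat.le_induction with
  | base => exact hx
  | succ m him ih =>
    have hmem : x ∈ S m := ih (by omega) fun m' hm' hm'm => hxd m' hm' (by omega)
    exact (mem_succ_iff hS (by omega)).2 ⟨.inl hmem, hxd m him (by omega)⟩

end LawlerMoore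

open Pointwise in
theorem stmt_16_general (n : ℕ) (p d : ℕ → ℕ)
    (hd : ∀ i j, i ≤ j → j < n → d i ≤ d j)
    (S S' : ℕ → Finset ℕ)
    (hS0 : S 0 = {0})
    (hS' : ∀ j < n, S' (j + 1) = S j + ({0, p j} : Finset ℕ))
    (hScap : ∀ j < n, S (j + 1) = (S' (j + 1)).filter (· ≤ d j)) :
    ∀ s ∈ S n, 0 < s →
      ∀ j, j < n → s ∈ S (j + 1) → (∀ j' < j, s ∉ S (j' + 1)) →
        p j ≤ s ∧ s - p j ∈ S j ∧ (s ≤ d j → s - p j ∈ S n) := by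
  intro s _ hs j hj hsj hmin
  have hS : ∀ j < n, S (j + 1) = (S j + {0, p j}).filter (· ≤ d j) := fun j hj => by
    rw [hScap j hj, hS' j hj]
  obtain ⟨hsj, hsd⟩ := (LawlerMoore.mem_succ_iff hS hj).1 hsj
  have hs_new : s ∉ S j := by
    rcases j with _ | j
    · simpa [hS0] using hs.ne'
    · exact hmin j (Nat.lt_succ_self j)
  obtain ⟨hps, hprev⟩ := hsj.resolve_left hs_new
  refine ⟨hps, hprev, fun _ => ?_⟩
  exact LawlerMoore.mem_of_mem_of_le_deadlines hS hprev hj.le le_rfl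
    fun m hjm hmn => (Nat.sub_le s (p j)).trans (hsd.trans (hd j m hjm hmn))

open Pointwise in
theorem stmt_16 (n : ℕ) (p d : ℕ → ℕ)
    (hp : ∀ j < n, 0 < p j)
    (hd : ∀ i j, i ≤ j → j < n → d i ≤ d j)
    (S S' : ℕ → Finset ℕ)
    (hS0 : S 0 = {0})
    (hS' : ∀ j < n, S' (j + 1) = S j + ({0, p j} : Finset ℕ))
    (hScap : ∀ j < n, S (j + 1) = (S' (j + 1)).filter (· ≤ d j)) :
    ∀ s ∈ S n, 0 < s →
      ∀ j, j < n → s ∈ S (j + 1) → (∀ j' < j, s ∉ S (j' + 1)) →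
        p j ≤ s ∧ s - p j ∈ S j ∧ (s ≤ d j → s - p j ∈ S n) :=
  stmt_16_general n p d hd S S' hS0 hS' hScap
end
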